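/- Let L be the Laplacian of the path graph P_n (tridiagonal matrix with diagonal entries 1,2,…,2,1 and off-diagonal entries -1). Then the second smallest eigenvalue of L equals 4 sin²(π/(2n)). -/

import Mathlib

open Matrix Real

/-! For `0 ≤ k < n`, the vector `vᵢ = cos((2i+1)x)` with `x = kπ/(2n)` is an eigenvector of the
path Laplacian with eigenvalue `4 sin² x`: in the interior this is the identity
`2 cos a - cos(a - 2x) - cos(a + 2x) = 4 sin² x cos a`, and at both ends it persists because the
extension of `v` to `ℤ` is symmetric about `-1/2` and about `n - 1/2`. These `n` eigenvalues are
distinct and increase with `k`, so they are the whole spectrum in increasing order; the second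
one is `4 sin²(π/(2n))`. -/

def pathLaplacian (n : ℕ) : Matrix (Fin n) (Fin n) ℝ :=
  Matrix.of fun i j => if i = j then (if i.val = 0 ∨ i.val = n - 1 then 1 else 2)
    else if ((i : ℤ) - (j : ℤ)).natAbs = 1 then -1 else 0

theorem Fin.sum_ite_intCast_eq {M : Type*} [AddCommMonoid M] {n : ℕ} (w : ℤ → M) (a : ℤ) :
    ∑ j : Fin n, (if (j : ℤ) = a then w j else 0) = if 0 ≤ a ∧ a < n then w a else 0 := by
  split_ifs with ha
  · lift a to ℕ using ha.1
    have ha' : a < n := by exact_mod_cast ha.2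
    rw [Finset.sum_eq_single_of_mem (⟨a, ha'⟩ : Fin n) (Finset.mem_univ _)]
    · simp
    · intro j _ hj
      rw [if_neg]
      exact fun h => hj (Fin.ext (by exact_mod_cast h))
  · refine Finset.sum_eq_zero fun j _ => if_neg ?_
    rintro rfl
    exact ha ⟨by positivity, by exact_mod_cast j.isLt⟩

theorem pathLaplacian_apply (n : ℕ) (i j : Fin n) :
    pathLaplacian n i j = (if j = i then (if i.val = 0 ∨ i.val = n - 1 then 1 else 2) else 0)
      - (if (j : ℤ) = i - 1 then 1 else 0) - (if (j : ℤ) = i + 1 then 1 else 0) := by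
  simp only [pathLaplacian, of_apply, Fin.ext_iff]
  split_ifs <;> (try norm_num) <;> omega

theorem pathLaplacian_mulVec_apply {n : ℕ} (hn : 2 ≤ n) (w : ℤ → ℝ)
    (hw₀ : w (-1) = w 0) (hwₙ : w n = w (n - 1)) (i : Fin n) :
    (pathLaplacian n *ᵥ fun j => w j) i = 2 * w i - w (i - 1) - w (i + 1) := by
  simp only [mulVec, dotProduct, pathLaplacian_apply, sub_mul, ite_mul, one_mul, zero_mul,
    Finset.sum_sub_distrib, Finset.sum_ite_eq', Finset.mem_univ, if_true]
  rw [Fin.sum_ite_intCast_eq, Fin.sum_ite_intCast_eq]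
  obtain ⟨m, hm⟩ := i
  simp only
  rcases Nat.eq_zero_or_pos m with rfl | hm₀
  · rw [if_pos (Or.inl rfl), if_neg (by omega), if_pos (by omega)]
    simp [hw₀]
    ring
  by_cases hm₁ : m = n - 1
  · have hm' : (m : ℤ) + 1 = n := by omega
    rw [if_pos (Or.inr hm₁), if_pos (by omega), if_neg (by omega), hm', hwₙ, ← hm',
      add_sub_cancel_right]
    ring
  · rw [if_neg (by omega), if_pos (by omega), if_pos (by omega)]

theorem Matrix.mem_spectrum_of_mulVec_eq_smul {ι K : Type*} [Fintype ι] [DecidableEq ι]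
    [CommRing K] [Nontrivial K]
    {A : Matrix ι ι K} {v : ι → K} {μ : K} (hv : v ≠ 0) (h : A *ᵥ v = μ • v) :
    μ ∈ spectrum K A := by
  rw [← Matrix.spectrum_toLin']
  exact (Module.End.hasEigenvalue_of_hasEigenvector
    ⟨Module.End.mem_eigenspace_iff.mpr (by simpa using h), hv⟩).mem_spectrum

theorem Monotone.eq_of_strictMono_of_range_subset {α : Type*} [LinearOrder α] {n : ℕ}
    {f g : Fin n → α} (hf : Monotone f) (hg : StrictMono g) (h : Set.range g ⊆ Set.range f) :
    f = g := by
  classical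
  have hsub : Finset.univ.image g ⊆ Finset.univ.image f := by
    simpa [← Finset.coe_subset] using h
  have hg_card : (Finset.univ.image g).card = n := by
    simp [Finset.card_image_of_injective _ hg.injective]
  have hf_card : (Finset.univ.image f).card = n :=
    le_antisymm (Finset.card_image_le.trans_eq (by simp))
      (hg_card.symm.trans_le (Finset.card_le_card hsub))
  have hinj : Function.Injective f := by
    simpa using Finset.card_image_iff.mp (hf_card.trans (by simp))
  have hrange : Set.range f = Set.range g := by
    simpa [← Finset.coe_inj] using
      (Finset.eq_of_subset_of_card_le hsub (by rw [hf_card, hg_card])).symm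
  exact ((hf.strictMono_of_injective hinj).range_inj hg).mp hrange

theorem Real.two_mul_cos_sub_cos_sub_cos (a x : ℝ) :
    2 * cos a - cos (a - 2 * x) - cos (a + 2 * x) = 4 * sin x ^ 2 * cos a := by
  rw [cos_sub, cos_add, cos_two_mul, cos_sq']
  ring

theorem pathLaplacian_mulVec_cos {n : ℕ} (hn : 2 ≤ n) {x : ℝ} {k : ℕ}
    (hx : 2 * n * x = k * π) :
    pathLaplacian n *ᵥ (fun i : Fin n => cos ((2 * i + 1) * x)) =
      (4 * sin x ^ 2) • fun i : Fin n => cos ((2 * i + 1) * x) := by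
  have hwₙ : cos ((2 * n + 1) * x) = cos ((2 * (n - 1) + 1) * x) := by
    rw [show (2 * n + 1) * x = x + k * π by linear_combination hx,
      show (2 * (n - 1) + 1) * x = k * π - x by linear_combination hx,
      cos_add_nat_mul_pi, cos_nat_mul_pi_sub]
  ext i
  have hrow := pathLaplacian_mulVec_apply hn (fun j : ℤ => cos ((2 * j + 1) * x))
    (by rw [← cos_neg]; push_cast; ring_nf) (by exact_mod_cast hwₙ) i
  simp only [Int.cast_natCast] at hrow
  rw [hrow, Pi.smul_apply, smul_eq_mul, ← two_mul_cos_sub_cos_sub_cos]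
  push_cast
  ring_nf

theorem pathLaplacian_eigenvalue {n : ℕ} (hn : 2 ≤ n) {k : ℕ} (hk : k < n) :
    4 * sin (k * π / (2 * n)) ^ 2 ∈ spectrum ℝ (pathLaplacian n) := by
  have hn₀ : (0 : ℝ) < n := by positivity
  set x := k * π / (2 * n)
  have hx : x < π / 2 := by
    rw [div_lt_div_iff₀ (by positivity) (by positivity)]
    have : (k : ℝ) < n := by exact_mod_cast hk
    nlinarith [pi_pos]
  refine mem_spectrum_of_mulVec_eq_smul (fun hv => ?_) (pathLaplacian_mulVec_cos hn (k := k)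
    (by simp only [x]; field_simp))
  have hv₀ := congrFun hv ⟨0, by omega⟩
  simp only [CharP.cast_eq_zero, mul_zero, zero_add, one_mul, Pi.zero_apply] at hv₀
  exact (cos_pos_of_mem_Ioo ⟨by linarith [pi_pos, show 0 ≤ x by positivity], hx⟩).ne' hv₀

theorem strictMono_four_mul_sin_sq {n : ℕ} :
    StrictMono fun k : Fin n => 4 * sin (k * π / (2 * n)) ^ 2 := by
  intro a b hab
  have hn₀ : (0 : ℝ) < n := by exact_mod_cast b.pos
  have mem : ∀ k : Fin n, k * π / (2 * n) ∈ Set.Icc (-(π / 2)) (π / 2) := fun k => by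
    have : (k : ℝ) ≤ n := by exact_mod_cast k.isLt.le
    constructor
    · linarith [pi_pos, show 0 ≤ k * π / (2 * n) by positivity]
    · rw [div_le_div_iff₀ (by positivity) (by positivity)]; nlinarith [pi_pos]
  have hsin := strictMonoOn_sin (mem a) (mem b) (by gcongr; exact_mod_cast hab)
  have hsin₀ : 0 ≤ sin (a * π / (2 * n)) :=
    sin_nonneg_of_nonneg_of_le_pi (by positivity) (by linarith [(mem a).2, pi_pos])
  dsimp only
  gcongr

/-- The second smallest eigenvalue (algebraic connectivity) of the
Laplacian of the path graph `P_n` equals `4 sin²(π/(2n))`. -/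
theorem stmt2 {n : ℕ} (hn : 2 ≤ n)
    (L : Matrix (Fin n) (Fin n) ℝ)
    (hLdef : ∀ i j : Fin n,
      L i j = if i = j then (if i.val = 0 ∨ i.val = n - 1 then 1 else 2)
        else if ((i : ℤ) - (j : ℤ)).natAbs = 1 then -1 else 0)
    (hL : L.IsHermitian)
    (ev : Fin n → ℝ) (hmono : Monotone ev)
    (hev : ∃ σ : Equiv.Perm (Fin n), ev = hL.eigenvalues ∘ σ) :
    ev ⟨1, lt_of_lt_of_le one_lt_two hn⟩ = 4 * Real.sin (π / (2 * n)) ^ 2 := by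
  obtain ⟨σ, rfl⟩ := hev
  have hLpath : L = pathLaplacian n := Matrix.ext hLdef
  have hspec : Set.range hL.eigenvalues = spectrum ℝ (pathLaplacian n) := by
    rw [← hLpath, hL.spectrum_real_eq_range_eigenvalues]
  have hsorted := hmono.eq_of_strictMono_of_range_subset strictMono_four_mul_sin_sq <| by
    rintro _ ⟨k, rfl⟩
    rw [σ.surjective.range_comp, hspec]
    exact pathLaplacian_eigenvalue hn k.isLt
  rw [hsorted]
  simp
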